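/- Let α = 1 and β > 0, let φ be an analytic self-map of the open unit disk D, and let g be analytic on D. Then the operator U_gC_φ, defined by (U_gC_φ f)(z) = ∫₀^z f(φ(ξ)) g'(ξ) dξ, is bounded from Z^1 to Z^β if and only if g'' ∈ H_{v_β}^∞ and sup_{z∈D} (1−|z|²)^β log(2/(1−|φ(z)|²)) |g'(z)φ'(z)| < ∞. -/

import Mathlib

noncomputable section

/-- The open unit disk in the complex plane. -/
def uD : Set ℂ := Metric.ball 0 1

/-- The Zygmund-type quantity `(1-|z|^2)^a * |f''(z)|`. -/
def zygS (a : ℝ) (f : ℂ → ℂ) (z : ℂ) : ℝ := (1 - ‖z‖ ^ 2) ^ a * ‖deriv (deriv f) z‖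

/-- Membership in the Zygmund-type space `Z^a`. -/
def memZ (a : ℝ) (f : ℂ → ℂ) : Prop :=
  AnalyticOn ℂ f uD ∧ ∃ M : ℝ, ∀ z ∈ uD, zygS a f z ≤ M

/-- The Zygmund-type norm `‖f‖_{Z^a} = |f 0| + |f' 0| + sup_{z ∈ D} (1-|z|^2)^a |f''(z)|`. -/
def zNorm (a : ℝ) (f : ℂ → ℂ) : ℝ := ‖f 0‖ + ‖deriv f 0‖ + sSup (zygS a f '' uD)

/-- Membership in the weighted space `H^∞_{v_b}` (for `u` analytic on `uD`). -/
def memHv (b : ℝ) (u : ℂ → ℂ) : Prop :=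
  ∃ M : ℝ, ∀ z ∈ uD, (1 - ‖z‖ ^ 2) ^ b * ‖u z‖ ≤ M

/-- `T` is a bounded operator from `Z^a` to `Z^b`. -/
def boundedOp (a b : ℝ) (T : (ℂ → ℂ) → ℂ → ℂ) : Prop :=
  (∀ f, memZ a f → memZ b (T f)) ∧
    ∃ C > 0, ∀ f, memZ a f → zNorm b (T f) ≤ C * zNorm a f

/-- `(U_g C_φ f)(z) = ∫₀^z f(φ(ξ)) g'(ξ) dξ`, parametrized along the segment from `0` to `z`. -/
def UgCphi (g φ : ℂ → ℂ) (f : ℂ → ℂ) : ℂ → ℂ :=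
  fun z => ∫ t in (0:ℝ)..1, z * (f (φ ((t : ℂ) * z)) * deriv g ((t : ℂ) * z))

/-!
For `f ∈ Z¹`, integrating `(1 - |z|²) |f''(z)| ≤ ‖f‖` along the radius gives
`|f'(w)| ≲ ‖f‖ log (2 / (1 - |w|²))` and `|f(w)| ≤ ‖f‖`. Since
`(U_g C_φ f)'' = f'(φ) φ' g' + f(φ) g''`, these two estimates give sufficiency.
For necessity, `f ≡ 1` gives `g'' ∈ H^∞_{v_β}`, and testing against the primitive `F_a` of
`log (2 / (1 - ā z))` at `a = φ(z)`, which has `‖F_a‖ ≤ 3` and `|F_a'(a)| = log (2 / (1 - |a|²))`,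
isolates the logarithmic term.
-/

open Complex ComplexConjugate Metric Set Filter Topology

lemma mem_uD_iff {z : ℂ} : z ∈ uD ↔ ‖z‖ < 1 := mem_ball_zero_iff

lemma isOpen_uD : IsOpen uD := isOpen_ball

lemma zero_mem_uD : (0 : ℂ) ∈ uD := mem_uD_iff.2 (by simp)

lemma one_sub_sq_norm_pos {z : ℂ} (hz : z ∈ uD) : 0 < 1 - ‖z‖ ^ 2 := by
  have := mem_uD_iff.1 hz
  nlinarith [norm_nonneg z]

lemma rpow_one_sub_sq_norm_nonneg (b : ℝ) {z : ℂ} (hz : z ∈ uD) : 0 ≤ (1 - ‖z‖ ^ 2) ^ b :=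
  Real.rpow_nonneg (one_sub_sq_norm_pos hz).le b

lemma ofReal_mul_mem_ball {R : ℝ} {w : ℂ} (hw : w ∈ ball (0 : ℂ) R) {t : ℝ}
    (ht : t ∈ Icc (0 : ℝ) 1) : (t : ℂ) * w ∈ ball (0 : ℂ) R := by
  rw [mem_ball_zero_iff] at hw ⊢
  rw [norm_mul, norm_real, Real.norm_of_nonneg ht.1]
  nlinarith [norm_nonneg w, ht.2]

lemma hasDerivAt_ofReal_mul_comp {u : ℂ → ℂ} {u' w : ℂ} {t : ℝ} (hu : HasDerivAt u u' (t * w)) :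
    HasDerivAt (fun s : ℝ => u (s * w)) (u' * w) t :=
  (hu.comp (t : ℂ) (hasDerivAt_mul_const w)).comp_ofReal

def radialPrimitive (h : ℂ → ℂ) (w : ℂ) : ℂ := ∫ t in (0 : ℝ)..1, w * h (t * w)

section radialPrimitive

variable {R : ℝ} {h : ℂ → ℂ} {z : ℂ}

@[simp]
lemma radialPrimitive_zero (h : ℂ → ℂ) : radialPrimitive h 0 = 0 := by
  simp [radialPrimitive]

lemma radialPrimitive_eq_sub {G : ℂ → ℂ} (hh : ContinuousOn h (ball 0 R))
    (hG : ∀ z ∈ ball (0 : ℂ) R, HasDerivAt G (h z) z) {w : ℂ} (hw : w ∈ ball (0 : ℂ) R) :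
    radialPrimitive h w = G w - G 0 := by
  have hderiv : ∀ t ∈ uIcc (0 : ℝ) 1,
      HasDerivAt (fun s : ℝ => G (s * w)) (w * h (t * w)) t := by
    intro t ht
    rw [uIcc_of_le zero_le_one] at ht
    exact (hasDerivAt_ofReal_mul_comp (hG _ (ofReal_mul_mem_ball hw ht))).congr_deriv
      (mul_comm _ _)
  have hint : IntervalIntegrable (fun t : ℝ => w * h (t * w)) MeasureTheory.volume 0 1 := by
    refine ContinuousOn.intervalIntegrable ?_
    rw [uIcc_of_le zero_le_one]
    exact continuousOn_const.mul
      (hh.comp (by fun_prop) fun t ht => ofReal_mul_mem_ball hw ht)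
  simpa [radialPrimitive] using intervalIntegral.integral_eq_sub_of_hasDerivAt hderiv hint

lemma hasDerivAt_radialPrimitive (hh : DifferentiableOn ℂ h (ball 0 R)) (hz : z ∈ ball (0 : ℂ) R) :
    HasDerivAt (radialPrimitive h) (h z) z := by
  obtain ⟨G, hG⟩ := hh.isExactOn_ball
  have hloc : radialPrimitive h =ᶠ[𝓝 z] fun w => G w - G 0 :=
    eventually_of_mem (isOpen_ball.mem_nhds hz) fun w hw =>
      radialPrimitive_eq_sub hh.continuousOn hG hw
  exact ((hG z hz).sub_const (G 0)).congr_of_eventuallyEq hloc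

lemma differentiableOn_radialPrimitive (hh : DifferentiableOn ℂ h (ball 0 R)) :
    DifferentiableOn ℂ (radialPrimitive h) (ball 0 R) := fun _ hz =>
  (hasDerivAt_radialPrimitive hh hz).differentiableAt.differentiableWithinAt

lemma deriv_radialPrimitive (hh : DifferentiableOn ℂ h (ball 0 R)) (hz : z ∈ ball (0 : ℂ) R) :
    deriv (radialPrimitive h) z = h z :=
  (hasDerivAt_radialPrimitive hh hz).deriv

lemma deriv_deriv_radialPrimitive (hh : DifferentiableOn ℂ h (ball 0 R))
    (hz : z ∈ ball (0 : ℂ) R) : deriv (deriv (radialPrimitive h)) z = deriv h z :=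
  EventuallyEq.deriv_eq <| eventually_of_mem (isOpen_ball.mem_nhds hz) fun _ hw =>
    deriv_radialPrimitive hh hw

end radialPrimitive

lemma norm_le_of_norm_deriv_radial_le {R : ℝ} {u : ℂ → ℂ} (hu : DifferentiableOn ℂ u (ball 0 R))
    {w : ℂ} (hw : w ∈ ball (0 : ℂ) R) {B B' : ℝ → ℝ}
    (hB : ∀ t ∈ Icc (0 : ℝ) 1, HasDerivAt B (B' t) t) (h0 : ‖u 0‖ ≤ B 0)
    (hbound : ∀ t ∈ Icc (0 : ℝ) 1, ‖deriv u (t * w)‖ * ‖w‖ ≤ B' t) : ‖u w‖ ≤ B 1 := by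
  have hu' : ∀ t ∈ Icc (0 : ℝ) 1,
      HasDerivAt (fun s : ℝ => u (s * w)) (deriv u (t * w) * w) t := fun t ht =>
    hasDerivAt_ofReal_mul_comp
      (hu.differentiableAt (isOpen_ball.mem_nhds (ofReal_mul_mem_ball hw ht))).hasDerivAt
  have := image_norm_le_of_norm_deriv_right_le_deriv_boundary' (f := fun s : ℝ => u (s * w))
    (fun t ht => (hu' t ht).continuousAt.continuousWithinAt)
    (fun t ht => (hu' t (Ico_subset_Icc_self ht)).hasDerivWithinAt) (by simpa using h0)
    (fun t ht => (hB t ht).continuousAt.continuousWithinAt)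
    (fun t ht => (hB t (Ico_subset_Icc_self ht)).hasDerivWithinAt)
    (fun t ht => by rw [norm_mul]; exact hbound t (Ico_subset_Icc_self ht))
    (right_mem_Icc.2 zero_le_one)
  simpa using this

lemma neg_log_one_sub_le_log_two_div {r : ℝ} (h0 : 0 ≤ r) (h1 : r < 1) :
    -Real.log (1 - r) ≤ Real.log (2 / (1 - r ^ 2)) := by
  rw [← Real.log_inv]
  apply Real.log_le_log (inv_pos.2 (by linarith))
  rw [inv_eq_one_div, div_le_div_iff₀ (by linarith) (by nlinarith)]
  nlinarith

lemma hasDerivAt_log_one_sub_mul {r t : ℝ} (h : 0 < 1 - t * r) :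
    HasDerivAt (fun s => Real.log (1 - s * r)) (-r / (1 - t * r)) t := by
  simpa using (((hasDerivAt_id t).mul_const r).const_sub 1).log h.ne'

section Zygmund

variable {a S : ℝ} {f : ℂ → ℂ} {w z : ℂ}

lemma zygS_nonneg (a : ℝ) (f : ℂ → ℂ) (hz : z ∈ uD) : 0 ≤ zygS a f z :=
  mul_nonneg (rpow_one_sub_sq_norm_nonneg a hz) (norm_nonneg _)

lemma norm_deriv_le_of_zygS_le (hf : DifferentiableOn ℂ f uD) (hS : ∀ z ∈ uD, zygS 1 f z ≤ S)
    (hw : w ∈ uD) : ‖deriv f w‖ ≤ ‖deriv f 0‖ - S * Real.log (1 - ‖w‖) := by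
  set r := ‖w‖
  have hr : r < 1 := mem_uD_iff.1 hw
  have h := norm_le_of_norm_deriv_radial_le (hf.deriv isOpen_uD) hw
    (B := fun t => ‖deriv f 0‖ - S * Real.log (1 - t * r)) (B' := fun t => S * r / (1 - t * r))
    ?_ (by simp) ?_
  · simpa using h
  · intro t ht
    have hpos : 0 < 1 - t * r := by nlinarith [ht.2, norm_nonneg w]
    exact (((hasDerivAt_log_one_sub_mul hpos).const_mul S).const_sub _).congr_deriv (by ring)
  · intro t ht
    have hpos : 0 < 1 - t * r := by nlinarith [ht.2, norm_nonneg w]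
    have hzt := hS _ (ofReal_mul_mem_ball hw ht)
    rw [zygS, Real.rpow_one, norm_mul, norm_real, Real.norm_of_nonneg ht.1] at hzt
    change (1 - (t * r) ^ 2) * _ ≤ S at hzt
    have htr : 0 ≤ t * r := mul_nonneg ht.1 (norm_nonneg w)
    have key : (1 - t * r) * ‖deriv (deriv f) (t * w)‖ ≤ S := le_trans (by
      nlinarith [mul_nonneg (mul_nonneg htr hpos.le) (norm_nonneg (deriv (deriv f) (t * w)))]) hzt
    rw [le_div_iff₀ hpos]
    nlinarith [norm_nonneg w]

lemma norm_deriv_le_log_of_zygS_le (hf : DifferentiableOn ℂ f uD)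
    (hS : ∀ z ∈ uD, zygS 1 f z ≤ S) (hw : w ∈ uD) :
    ‖deriv f w‖ ≤ ‖deriv f 0‖ + S * Real.log (2 / (1 - ‖w‖ ^ 2)) := by
  have hS0 : 0 ≤ S := (zygS_nonneg 1 f zero_mem_uD).trans (hS 0 zero_mem_uD)
  have := neg_log_one_sub_le_log_two_div (norm_nonneg w) (mem_uD_iff.1 hw)
  nlinarith [norm_deriv_le_of_zygS_le hf hS hw]

lemma norm_le_of_zygS_le (hf : DifferentiableOn ℂ f uD) (hS : ∀ z ∈ uD, zygS 1 f z ≤ S)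
    (hw : w ∈ uD) : ‖f w‖ ≤ ‖f 0‖ + ‖deriv f 0‖ + S := by
  set r := ‖w‖
  have hr : r < 1 := mem_uD_iff.1 hw
  have hr0 : 0 ≤ r := norm_nonneg w
  have hS0 : 0 ≤ S := (zygS_nonneg 1 f zero_mem_uD).trans (hS 0 zero_mem_uD)
  -- `B` is built from `(1 - s) log (1 - s) + s`, a primitive of `-log (1 - s)` that is at
  -- most `1` on `[0, 1]`
  have h := norm_le_of_norm_deriv_radial_le hf hw
    (B := fun t => ‖f 0‖ + t * r * ‖deriv f 0‖
      + S * ((1 - t * r) * Real.log (1 - t * r) + t * r))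
    (B' := fun t => (‖deriv f 0‖ - S * Real.log (1 - t * r)) * r) ?_ (by simp) ?_
  · have hlog : (1 - r) * Real.log (1 - r) ≤ 0 :=
      mul_nonpos_of_nonneg_of_nonpos (by linarith) (Real.log_nonpos (by linarith) (by linarith))
    simp only [one_mul] at h
    nlinarith [norm_nonneg (deriv f 0), norm_nonneg w]
  · intro t ht
    have hpos : 0 < 1 - t * r := by nlinarith [ht.2, norm_nonneg w]
    have hlin : HasDerivAt (fun s : ℝ => 1 - s * r) (-r) t := by
      simpa using ((hasDerivAt_id t).mul_const r).const_sub 1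
    have hid : HasDerivAt (fun s : ℝ => s * r) r t := by
      simpa using (hasDerivAt_id t).mul_const r
    exact (((hid.mul_const _).const_add _).add
      (((hlin.mul (hasDerivAt_log_one_sub_mul hpos)).add hid).const_mul S)).congr_deriv
        (by linear_combination (-(r * S)) * mul_inv_cancel₀ hpos.ne')
  · intro t ht
    have := norm_deriv_le_of_zygS_le hf hS (ofReal_mul_mem_ball hw ht)
    rw [norm_mul, norm_real, Real.norm_of_nonneg ht.1] at this
    exact mul_le_mul_of_nonneg_right this (norm_nonneg w)

lemma zNorm_nonneg (a : ℝ) (f : ℂ → ℂ) : 0 ≤ zNorm a f := by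
  have : 0 ≤ sSup (zygS a f '' uD) :=
    Real.sSup_nonneg (forall_mem_image.2 fun _ hz => zygS_nonneg a f hz)
  unfold zNorm
  positivity

lemma zygS_le_sSup (hf : memZ a f) (hz : z ∈ uD) : zygS a f z ≤ sSup (zygS a f '' uD) := by
  obtain ⟨M, hM⟩ := hf.2
  exact le_csSup ⟨M, forall_mem_image.2 hM⟩ (mem_image_of_mem _ hz)

lemma zygS_le_zNorm (hf : memZ a f) (hz : z ∈ uD) : zygS a f z ≤ zNorm a f := by
  have := zygS_le_sSup hf hz
  unfold zNorm
  linarith [norm_nonneg (f 0), norm_nonneg (deriv f 0)]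

lemma zNorm_le_of_zygS_le (hS : ∀ z ∈ uD, zygS a f z ≤ S) :
    zNorm a f ≤ ‖f 0‖ + ‖deriv f 0‖ + S := by
  unfold zNorm
  gcongr
  exact csSup_le (image_nonempty.2 ⟨0, zero_mem_uD⟩) (forall_mem_image.2 hS)

lemma norm_le_zNorm_one (hf : memZ 1 f) (hw : w ∈ uD) : ‖f w‖ ≤ zNorm 1 f :=
  norm_le_of_zygS_le hf.1.differentiableOn (fun _ hz => zygS_le_sSup hf hz) hw

lemma norm_deriv_le_zNorm_one_mul_log (hf : memZ 1 f) (hw : w ∈ uD) :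
    ‖deriv f w‖ ≤ 3 * zNorm 1 f * Real.log (2 / (1 - ‖w‖ ^ 2)) := by
  set S := sSup (zygS 1 f '' uD)
  set L := Real.log (2 / (1 - ‖w‖ ^ 2))
  have h := norm_deriv_le_log_of_zygS_le hf.1.differentiableOn
    (fun _ hz => zygS_le_sSup hf hz) hw
  have hS0 : 0 ≤ S := (zygS_nonneg 1 f zero_mem_uD).trans (zygS_le_sSup hf zero_mem_uD)
  have hQ : zNorm 1 f = ‖f 0‖ + ‖deriv f 0‖ + S := rfl
  have hL : Real.log 2 ≤ L := by
    have hw' := one_sub_sq_norm_pos hw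
    exact Real.log_le_log two_pos (le_div_self two_pos.le hw' (by nlinarith [norm_nonneg w]))
  have h2 := Real.log_two_gt_d9
  nlinarith [norm_nonneg (f 0), norm_nonneg (deriv f 0)]

end Zygmund

def logKernel (a z : ℂ) : ℂ := (Real.log 2 : ℂ) - log (1 - conj a * z)

section logKernel

variable {a z : ℂ}

lemma one_sub_conj_mul_mem_slitPlane (ha : a ∈ uD) (hz : z ∈ uD) :
    1 - conj a * z ∈ slitPlane := by
  rw [sub_eq_add_neg]
  apply mem_slitPlane_of_norm_lt_one
  rw [norm_neg, norm_mul, norm_conj]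
  have := mem_uD_iff.1 ha
  have := mem_uD_iff.1 hz
  nlinarith [norm_nonneg a, norm_nonneg z]

lemma hasDerivAt_logKernel (ha : a ∈ uD) (hz : z ∈ uD) :
    HasDerivAt (logKernel a) (conj a / (1 - conj a * z)) z := by
  have := (((hasDerivAt_id z).const_mul (conj a)).const_sub 1).clog
    (one_sub_conj_mul_mem_slitPlane ha hz)
  exact (this.const_sub _).congr_deriv (by simp [neg_div])

lemma differentiableOn_logKernel (ha : a ∈ uD) : DifferentiableOn ℂ (logKernel a) uD :=
  fun _ hz => (hasDerivAt_logKernel ha hz).differentiableAt.differentiableWithinAt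

lemma norm_logKernel_self (ha : a ∈ uD) :
    ‖logKernel a a‖ = Real.log (2 / (1 - ‖a‖ ^ 2)) := by
  have hpos := one_sub_sq_norm_pos ha
  have h1 : 1 - conj a * a = ((1 - ‖a‖ ^ 2 : ℝ) : ℂ) := by
    rw [conj_mul']
    push_cast
    ring
  have hge : 1 ≤ 2 / (1 - ‖a‖ ^ 2) := by
    rw [le_div_iff₀ hpos]
    nlinarith [norm_nonneg a]
  rw [logKernel, h1, ← ofReal_log hpos.le, ← ofReal_sub, ← Real.log_div two_ne_zero hpos.ne',
    norm_real, Real.norm_of_nonneg (Real.log_nonneg hge)]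

lemma zygS_radialPrimitive_logKernel_le (ha : a ∈ uD) (hz : z ∈ uD) :
    zygS 1 (radialPrimitive (logKernel a)) z ≤ 2 := by
  rw [zygS, Real.rpow_one, deriv_deriv_radialPrimitive (differentiableOn_logKernel ha) hz,
    (hasDerivAt_logKernel ha hz).deriv, norm_div, norm_conj]
  have hz1 := mem_uD_iff.1 hz
  have hlb : 1 - ‖z‖ ≤ ‖1 - conj a * z‖ := by
    have := norm_sub_norm_le (1 : ℂ) (conj a * z)
    rw [norm_one, norm_mul, norm_conj] at this
    nlinarith [norm_nonneg a, norm_nonneg z, mem_uD_iff.1 ha]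
  have ha' : (1 - ‖z‖ ^ 2) * ‖a‖ ≤ 1 - ‖z‖ ^ 2 :=
    mul_le_of_le_one_right (one_sub_sq_norm_pos hz).le (mem_uD_iff.1 ha).le
  rw [mul_div_assoc', div_le_iff₀ (by linarith)]
  nlinarith [norm_nonneg z]

lemma memZ_radialPrimitive_logKernel (ha : a ∈ uD) : memZ 1 (radialPrimitive (logKernel a)) :=
  ⟨(analyticOn_iff_differentiableOn isOpen_uD).2
      (differentiableOn_radialPrimitive (differentiableOn_logKernel ha)),
    2, fun _ hz => zygS_radialPrimitive_logKernel_le ha hz⟩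

lemma zNorm_radialPrimitive_logKernel_le (ha : a ∈ uD) :
    zNorm 1 (radialPrimitive (logKernel a)) ≤ 3 := by
  refine (zNorm_le_of_zygS_le fun _ hz => zygS_radialPrimitive_logKernel_le ha hz).trans ?_
  rw [radialPrimitive_zero, deriv_radialPrimitive (differentiableOn_logKernel ha) zero_mem_uD]
  simp only [logKernel, mul_zero, sub_zero, log_one, norm_zero, norm_real,
    Real.norm_of_nonneg (Real.log_nonneg one_le_two)]
  linarith [Real.log_two_lt_d9]

end logKernel

section UgCphi

variable {β : ℝ} {φ g f : ℂ → ℂ} {z : ℂ}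

lemma UgCphi_eq_radialPrimitive :
    UgCphi g φ f = radialPrimitive fun z => f (φ z) * deriv g z := rfl

lemma differentiableOn_comp_mul_deriv (hf : DifferentiableOn ℂ f uD)
    (hφ : DifferentiableOn ℂ φ uD) (hφm : MapsTo φ uD uD) (hg : DifferentiableOn ℂ g uD) :
    DifferentiableOn ℂ (fun z => f (φ z) * deriv g z) uD :=
  (hf.comp hφ hφm).mul (hg.deriv isOpen_uD)

lemma deriv_deriv_UgCphi (hf : DifferentiableOn ℂ f uD) (hφ : DifferentiableOn ℂ φ uD)
    (hφm : MapsTo φ uD uD) (hg : DifferentiableOn ℂ g uD) (hz : z ∈ uD) :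
    deriv (deriv (UgCphi g φ f)) z
      = deriv f (φ z) * deriv φ z * deriv g z + f (φ z) * deriv (deriv g) z := by
  rw [UgCphi_eq_radialPrimitive,
    deriv_deriv_radialPrimitive (differentiableOn_comp_mul_deriv hf hφ hφm hg) hz]
  have hfφ : HasDerivAt (fun z => f (φ z)) (deriv f (φ z) * deriv φ z) z :=
    (hf.differentiableAt (isOpen_uD.mem_nhds (hφm hz))).hasDerivAt.comp z
      (hφ.differentiableAt (isOpen_uD.mem_nhds hz)).hasDerivAt
  exact (hfφ.mul ((hg.deriv isOpen_uD).differentiableAt (isOpen_uD.mem_nhds hz)).hasDerivAt).deriv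

lemma memHv_of_boundedOp (hg : DifferentiableOn ℂ g uD) (hT : boundedOp 1 β (UgCphi g φ)) :
    memHv β (deriv (deriv g)) := by
  have hone : memZ 1 fun _ : ℂ => (1 : ℂ) := ⟨analyticOn_const, 0, fun z _ => by simp [zygS]⟩
  obtain ⟨M, hM⟩ := (hT.1 _ hone).2
  have hT_one : (UgCphi g φ fun _ => 1) = radialPrimitive (deriv g) := by
    simp only [UgCphi_eq_radialPrimitive, one_mul]
  refine ⟨M, fun z hz => ?_⟩
  simpa only [zygS, hT_one, deriv_deriv_radialPrimitive (hg.deriv isOpen_uD) hz] using hM z hz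

lemma exists_log_bound_of_boundedOp (hφ : DifferentiableOn ℂ φ uD) (hφm : MapsTo φ uD uD)
    (hg : DifferentiableOn ℂ g uD) (hT : boundedOp 1 β (UgCphi g φ)) :
    ∃ M : ℝ, ∀ z ∈ uD, (1 - ‖z‖ ^ 2) ^ β * Real.log (2 / (1 - ‖φ z‖ ^ 2))
      * ‖deriv g z * deriv φ z‖ ≤ M := by
  obtain ⟨M₀, hM₀⟩ := memHv_of_boundedOp hg hT
  obtain ⟨hmap, C, hC0, hC⟩ := hT
  refine ⟨C * 3 + 3 * M₀, fun z hz => ?_⟩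
  set a := φ z
  have ha : a ∈ uD := hφm hz
  set F := radialPrimitive (logKernel a)
  have hF : memZ 1 F := memZ_radialPrimitive_logKernel ha
  have hFn : zNorm 1 F ≤ 3 := zNorm_radialPrimitive_logKernel_le ha
  have hTF : zygS β (UgCphi g φ F) z ≤ C * 3 :=
    (zygS_le_zNorm (hmap F hF) hz).trans ((hC F hF).trans (mul_le_mul_of_nonneg_left hFn hC0.le))
  rw [zygS, deriv_deriv_UgCphi hF.1.differentiableOn hφ hφm hg hz,
    deriv_radialPrimitive (differentiableOn_logKernel ha) ha] at hTF
  have hFa : ‖F a‖ ≤ 3 := (norm_le_zNorm_one hF ha).trans hFn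
  have hW := rpow_one_sub_sq_norm_nonneg β hz
  set X := logKernel a a * deriv φ z * deriv g z
  set Y := F a * deriv (deriv g) z
  have hXY : ‖X‖ ≤ ‖X + Y‖ + ‖Y‖ := by
    simpa only [add_sub_cancel_right] using norm_sub_le (X + Y) Y
  calc (1 - ‖z‖ ^ 2) ^ β * Real.log (2 / (1 - ‖a‖ ^ 2)) * ‖deriv g z * deriv φ z‖
      = (1 - ‖z‖ ^ 2) ^ β * ‖X‖ := by
        simp only [X, norm_mul, norm_logKernel_self ha]
        ring
    _ ≤ (1 - ‖z‖ ^ 2) ^ β * (‖X + Y‖ + ‖Y‖) := by gcongr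
    _ = (1 - ‖z‖ ^ 2) ^ β * ‖X + Y‖ + ‖F a‖ * ((1 - ‖z‖ ^ 2) ^ β * ‖deriv (deriv g) z‖) := by
        rw [norm_mul]
        ring
    _ ≤ C * 3 + 3 * M₀ := by
        gcongr
        exact hM₀ z hz

lemma zygS_UgCphi_le (hf : memZ 1 f) (hφ : DifferentiableOn ℂ φ uD) (hφm : MapsTo φ uD uD)
    (hg : DifferentiableOn ℂ g uD) {M₁ M₂ : ℝ}
    (h₁ : ∀ z ∈ uD, (1 - ‖z‖ ^ 2) ^ β * ‖deriv (deriv g) z‖ ≤ M₁)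
    (h₂ : ∀ z ∈ uD, (1 - ‖z‖ ^ 2) ^ β * Real.log (2 / (1 - ‖φ z‖ ^ 2))
      * ‖deriv g z * deriv φ z‖ ≤ M₂) (hz : z ∈ uD) :
    zygS β (UgCphi g φ f) z ≤ zNorm 1 f * (3 * M₂ + M₁) := by
  rw [zygS, deriv_deriv_UgCphi hf.1.differentiableOn hφ hφm hg hz]
  have hW := rpow_one_sub_sq_norm_nonneg β hz
  have hQ := zNorm_nonneg 1 f
  have hA := norm_deriv_le_zNorm_one_mul_log hf (hφm hz)
  have hB := norm_le_zNorm_one hf (hφm hz)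
  have hsplit : ‖deriv f (φ z) * deriv φ z * deriv g z + f (φ z) * deriv (deriv g) z‖
      ≤ ‖deriv f (φ z)‖ * ‖deriv g z * deriv φ z‖ + ‖f (φ z)‖ * ‖deriv (deriv g) z‖ := by
    refine (norm_add_le _ _).trans_eq ?_
    simp only [norm_mul]
    ring
  calc (1 - ‖z‖ ^ 2) ^ β * ‖deriv f (φ z) * deriv φ z * deriv g z + f (φ z) * deriv (deriv g) z‖
      ≤ (1 - ‖z‖ ^ 2) ^ β * (‖deriv f (φ z)‖ * ‖deriv g z * deriv φ z‖)
        + ‖f (φ z)‖ * ((1 - ‖z‖ ^ 2) ^ β * ‖deriv (deriv g) z‖) :=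
        (mul_le_mul_of_nonneg_left hsplit hW).trans_eq (by ring)
    _ ≤ (1 - ‖z‖ ^ 2) ^ β * (3 * zNorm 1 f * Real.log (2 / (1 - ‖φ z‖ ^ 2))
          * ‖deriv g z * deriv φ z‖) + zNorm 1 f * ((1 - ‖z‖ ^ 2) ^ β * ‖deriv (deriv g) z‖) := by
        gcongr
    _ ≤ 3 * zNorm 1 f * M₂ + zNorm 1 f * M₁ := by
        have := h₂ z hz
        have := h₁ z hz
        nlinarith
    _ = zNorm 1 f * (3 * M₂ + M₁) := by ring

lemma boundedOp_UgCphi (hφ : DifferentiableOn ℂ φ uD) (hφm : MapsTo φ uD uD)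
    (hg : DifferentiableOn ℂ g uD) (h₁ : memHv β (deriv (deriv g)))
    (h₂ : ∃ M : ℝ, ∀ z ∈ uD, (1 - ‖z‖ ^ 2) ^ β * Real.log (2 / (1 - ‖φ z‖ ^ 2))
      * ‖deriv g z * deriv φ z‖ ≤ M) :
    boundedOp 1 β (UgCphi g φ) := by
  obtain ⟨M₁, h₁⟩ := h₁
  obtain ⟨M₂, h₂⟩ := h₂
  have hzyg := fun f (hf : memZ 1 f) z (hz : z ∈ uD) => zygS_UgCphi_le hf hφ hφm hg h₁ h₂ hz
  refine ⟨fun f hf => ⟨?_, _, hzyg f hf⟩, ‖deriv g 0‖ + 3 * |M₂| + |M₁| + 1, by positivity,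
    fun f hf => ?_⟩
  · exact (analyticOn_iff_differentiableOn isOpen_uD).2 <| differentiableOn_radialPrimitive <|
      differentiableOn_comp_mul_deriv hf.1.differentiableOn hφ hφm hg
  · have hQ := zNorm_nonneg 1 f
    have hT'0 : deriv (UgCphi g φ f) 0 = f (φ 0) * deriv g 0 :=
      deriv_radialPrimitive (differentiableOn_comp_mul_deriv hf.1.differentiableOn hφ hφm hg)
        zero_mem_uD
    have hf0 := norm_le_zNorm_one hf (hφm zero_mem_uD)
    refine (zNorm_le_of_zygS_le (hzyg f hf)).trans ?_
    have hT0 : UgCphi g φ f 0 = 0 := by rw [UgCphi_eq_radialPrimitive, radialPrimitive_zero]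
    rw [hT0, hT'0, norm_zero, norm_mul]
    nlinarith [le_abs_self M₁, le_abs_self M₂, norm_nonneg (deriv g 0)]

end UgCphi

theorem stmt_12_general (β : ℝ)
    (φ g : ℂ → ℂ) (hφ : AnalyticOn ℂ φ uD) (hφm : Set.MapsTo φ uD uD)
    (hg : AnalyticOn ℂ g uD) :
    boundedOp 1 β (UgCphi g φ) ↔
      (memHv β (deriv (deriv g)) ∧ (∃ M : ℝ, ∀ z ∈ uD, (1 - ‖z‖ ^ 2) ^ β * Real.log (2 / (1 - ‖φ z‖ ^ 2)) * ‖deriv g z * deriv φ z‖ ≤ M)) := by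
  have hφ' := hφ.differentiableOn
  have hg' := hg.differentiableOn
  exact ⟨fun hT => ⟨memHv_of_boundedOp hg' hT, exists_log_bound_of_boundedOp hφ' hφm hg' hT⟩,
    fun ⟨h₁, h₂⟩ => boundedOp_UgCphi hφ' hφm hg' h₁ h₂⟩

theorem stmt_12 (α β : ℝ) (hα : α = 1) (hβ : 0 < β)
    (φ g : ℂ → ℂ) (hφ : AnalyticOn ℂ φ uD) (hφm : Set.MapsTo φ uD uD)
    (hg : AnalyticOn ℂ g uD) :
    boundedOp 1 β (UgCphi g φ) ↔
      (memHv β (deriv (deriv g)) ∧ (∃ M : ℝ, ∀ z ∈ uD, (1 - ‖z‖ ^ 2) ^ β * Real.log (2 / (1 - ‖φ z‖ ^ 2)) * ‖deriv g z * deriv φ z‖ ≤ M)) :=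
  stmt_12_general β φ g hφ hφm hg
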